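/- Let σ ∈ S_n, j ∈ 𝒟(σ), and i ∈ 𝒟(σ) with i < j and σ⁻¹(i) < σ⁻¹(j) < σ⁻¹(n). Then (j,n)·σ < (i,n)·σ in the Bruhat order on S_n. -/

import Mathlib

/-- The number of inversions of a permutation. -/
def permLen {n : ℕ} (σ : Equiv.Perm (Fin n)) : ℕ :=
  (Finset.univ.filter (fun p : Fin n × Fin n => p.1 < p.2 ∧ σ p.2 < σ p.1)).card

/-- The Bruhat order on the symmetric group. -/
def permBruhatLE {n : ℕ} (u v : Equiv.Perm (Fin n)) : Prop :=
  Relation.ReflTransGen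
    (fun x y => (∃ a b : Fin n, a ≠ b ∧ y = Equiv.swap a b * x) ∧
      permLen x < permLen y) u v

/-- The strict Bruhat order. -/
def permBruhatLT {n : ℕ} (u v : Equiv.Perm (Fin n)) : Prop :=
  permBruhatLE u v ∧ u ≠ v

/-!
With `N = Fin.last n` and `u = (j,N)·σ` one has `(i,N)·σ = (j,N)·(i,j)·u`, and both left
multiplications raise the number of inversions: `(a,b)·u = u·(u⁻¹ a, u⁻¹ b)`, and when `a < b`
and `u⁻¹ a < u⁻¹ b`, sorting the image of each inverted pair under the position swap injects
the inversions of `u` into those of the product other than the new inversion `(u⁻¹ a, u⁻¹ b)`.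
-/

open Equiv Finset

section Inversions

variable {n : ℕ}

def permInversions (u : Perm (Fin n)) : Finset (Fin n × Fin n) :=
  univ.filter fun P => P.1 < P.2 ∧ u P.2 < u P.1

@[simp]
lemma mem_permInversions {u : Perm (Fin n)} {P : Fin n × Fin n} :
    P ∈ permInversions u ↔ P.1 < P.2 ∧ u P.2 < u P.1 := by
  simp [permInversions]

lemma permLen_eq_card_permInversions (u : Perm (Fin n)) : permLen u = #(permInversions u) := rfl

variable {u : Perm (Fin n)} {p q x y : Fin n}

lemma mk_mem_permInversions_mul_swap (hpq : p < q) (hu : u p < u q) :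
    (p, q) ∈ permInversions (u * swap p q) := by
  simpa using ⟨hpq, hu⟩

lemma swap_mk_mem_permInversions_mul_swap (h : (x, y) ∈ permInversions u)
    (hs : swap p q x < swap p q y) :
    (swap p q x, swap p q y) ∈ permInversions (u * swap p q) := by
  simpa using ⟨hs, (mem_permInversions.1 h).2⟩

lemma mem_permInversions_mul_swap (hpq : p < q) (hu : u p < u q)
    (h : (x, y) ∈ permInversions u) (hs : swap p q y < swap p q x) :
    (x, y) ∈ permInversions (u * swap p q) := by
  rw [mem_permInversions] at h ⊢
  obtain ⟨hxy, hux⟩ := h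
  refine ⟨hxy, ?_⟩
  simp only [Perm.mul_apply, swap_apply_def] at hs ⊢
  split_ifs at hs ⊢ <;> subst_vars <;> order

lemma permLen_lt_permLen_mul_swap (hpq : p < q) (hu : u p < u q) :
    permLen u < permLen (u * swap p q) := by
  set s := swap p q
  let f : Fin n × Fin n → Fin n × Fin n := fun P => if s P.1 < s P.2 then (s P.1, s P.2) else P
  have hff : ∀ P : Fin n × Fin n, P.1 < P.2 → f (f P) = P := by
    rintro ⟨x, y⟩ hxy
    by_cases hs : s x < s y <;> simp [f, hs, s, hxy]
  have hf : ∀ P ∈ permInversions u, f P ∈ (permInversions (u * s)).erase (p, q) := by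
    rintro ⟨x, y⟩ h
    have hxy := (mem_permInversions.1 h).1
    by_cases hs : s x < s y
    · simp only [f, hs, if_true, mem_erase]
      refine ⟨fun hpq' => ?_, swap_mk_mem_permInversions_mul_swap h hs⟩
      simp only [Prod.mk.injEq, s, swap_apply_eq_iff, swap_apply_left, swap_apply_right] at hpq'
      order
    · have hs' : s y < s x := (not_lt.1 hs).lt_of_ne (s.injective.ne hxy.ne')
      simp only [f, hs, if_false, mem_erase]
      refine ⟨fun hpq' => ?_, mem_permInversions_mul_swap hpq hu h hs'⟩
      simp only [Prod.mk.injEq] at hpq'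
      obtain ⟨rfl, rfl⟩ := hpq'
      exact (mem_permInversions.1 h).2.not_gt hu
  have hinj : Set.InjOn f (permInversions u) := by
    intro P hP Q hQ hPQ
    rw [← hff P (mem_permInversions.1 hP).1, hPQ, hff Q (mem_permInversions.1 hQ).1]
  rw [permLen_eq_card_permInversions, permLen_eq_card_permInversions]
  calc #(permInversions u) ≤ #((permInversions (u * s)).erase (p, q)) :=
        card_le_card_of_injOn f hf hinj
    _ < #(permInversions (u * s)) := card_erase_lt_of_mem (mk_mem_permInversions_mul_swap hpq hu)

lemma permLen_lt_permLen_swap_mul {a b : Fin n} (hab : a < b) (hu : u⁻¹ a < u⁻¹ b) :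
    permLen u < permLen (swap a b * u) := by
  have := permLen_lt_permLen_mul_swap (u := u) hu (by simpa using hab)
  rw [mul_swap_eq_swap_mul] at this
  simpa using this

lemma permBruhatLE_swap_mul {a b : Fin n} (hab : a ≠ b) (h : permLen u < permLen (swap a b * u)) :
    permBruhatLE u (swap a b * u) :=
  .single ⟨⟨a, b, hab, rfl⟩, h⟩

end Inversions

/-- for `i < j` both in `𝒟(σ)` with `σ⁻¹(i) < σ⁻¹(j) < σ⁻¹(n)`,
one has `(j,n)·σ < (i,n)·σ` in Bruhat order. -/
theorem stmt_17 {n : ℕ} (σ : Equiv.Perm (Fin (n + 1))) (i j : Fin (n + 1))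
    (hi : i < Fin.last n ∧ σ⁻¹ i < σ⁻¹ (Fin.last n))
    (hj : j < Fin.last n ∧ σ⁻¹ j < σ⁻¹ (Fin.last n))
    (hij : i < j) (hinv : σ⁻¹ i < σ⁻¹ j) :
    permBruhatLT (Equiv.swap j (Fin.last n) * σ) (Equiv.swap i (Fin.last n) * σ) := by
  set N := Fin.last n
  have hiN : i ≠ N := hi.1.ne
  have hjN : j ≠ N := hj.1.ne
  set u := swap j N * σ
  set w := swap i j * u
  have hwv : swap i N * σ = swap j N * w := by
    rw [← mul_assoc, ← mul_assoc, swap_mul_swap_mul_swap hij.ne hiN, swap_comm]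
  have hlen_uw : permLen u < permLen w :=
    permLen_lt_permLen_swap_mul hij (by simpa [u, swap_apply_of_ne_of_ne, hij.ne, hiN] using hi.2)
  have hlen_wv : permLen w < permLen (swap j N * w) :=
    permLen_lt_permLen_swap_mul hj.1
      (by simpa [w, u, swap_apply_of_ne_of_ne, hij.ne, hij.ne', hiN, hiN.symm, hjN.symm] using hinv)
  rw [hwv]
  exact ⟨(permBruhatLE_swap_mul hij.ne hlen_uw).trans (permBruhatLE_swap_mul hjN hlen_wv),
    fun h => (hlen_uw.trans hlen_wv).ne (congrArg permLen h)⟩
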